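/- Let d ≥ 2 be an integer, k ∈ {0,1,2,3}, and ε = (ε₀,ε₁,ε₂,ε₃) a quadruple of integers with |εᵢ| = ⌊d/2⌋ − (−1)^d·δ_{i,k} for all i (Kronecker delta). Let μ = (μ₀,μ₁,μ₂,μ₃) be a quadruple of natural numbers with μ₀ + 1 ≡ μ₁ ≡ μ₂ ≡ μ₃ (mod 2), and suppose every entry of γ := (2d−1)μ + 2ε is nonnegative. Then: (a) ε₀²+ε₁²+ε₂²+ε₃² = d² − d + 1; (b) (2d−1)(μ₀²+μ₁²+μ₂²+μ₃²) + 4(μ₀ε₀+μ₁ε₁+μ₂ε₂+μ₃ε₃) + 2d + 1 is even, and n := ½{(2d−1)μ^(2) + 4Σᵢμᵢεᵢ + 2d + 1} is the unique integer satisfying γ₀²+γ₁²+γ₂²+γ₃² = (2d−1)(2n−2) + 3, and n ≥ 1; (c) γ^(1) := γ₀+γ₁+γ₂+γ₃ is odd, so g := ½(γ^(1) − 1) is a natural number. -/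
import Mathlib


/-- Let `d ≥ 2`, `k ∈ {0,1,2,3}`, and `ε ∈ ℤ⁴` with
`|εᵢ| = ⌊d/2⌋ − (−1)^d·δ_{i,k}` for all `i`.  Let `μ ∈ ℕ⁴` satisfy
`μ₀ + 1 ≡ μ₁ ≡ μ₂ ≡ μ₃ (mod 2)` and suppose every entry of
`γ := (2d−1)μ + 2ε` is nonnegative.  Then:
(a) `ε₀²+ε₁²+ε₂²+ε₃² = d² − d + 1`;
(b) `(2d−1)μ⁽²⁾ + 4Σᵢμᵢεᵢ + 2d + 1` is even, and the integer `n` with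
`2n = (2d−1)μ⁽²⁾ + 4Σᵢμᵢεᵢ + 2d + 1` is the unique integer satisfying
`γ⁽²⁾ = (2d−1)(2n−2) + 3`, and `n ≥ 1`;
(c) `γ⁽¹⁾ = γ₀+γ₁+γ₂+γ₃` is odd, so there is a natural number `g` with
`2g + 1 = γ⁽¹⁾`. -/
theorem stmt_4 (d : ℕ) (hd : 2 ≤ d) (k : Fin 4) (ε : Fin 4 → ℤ)
    (hε : ∀ i, |ε i| = ((d / 2 : ℕ) : ℤ) - (-1) ^ d * (if i = k then 1 else 0))
    (μ : Fin 4 → ℕ)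
    (h₁ : μ 0 + 1 ≡ μ 1 [MOD 2]) (h₂ : μ 1 ≡ μ 2 [MOD 2]) (h₃ : μ 2 ≡ μ 3 [MOD 2])
    (γ : Fin 4 → ℤ) (hγ : ∀ i, γ i = (2 * (d : ℤ) - 1) * (μ i : ℤ) + 2 * ε i)
    (hγpos : ∀ i, 0 ≤ γ i) :
    (∑ i, (ε i) ^ 2 = (d : ℤ) ^ 2 - d + 1) ∧
    (Even ((2 * (d : ℤ) - 1) * (∑ i, (μ i : ℤ) ^ 2) + 4 * (∑ i, (μ i : ℤ) * ε i)
        + 2 * d + 1) ∧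
      ∃ n : ℤ, 2 * n = (2 * (d : ℤ) - 1) * (∑ i, (μ i : ℤ) ^ 2)
          + 4 * (∑ i, (μ i : ℤ) * ε i) + 2 * d + 1 ∧
        (∀ m : ℤ, (∑ i, (γ i) ^ 2 = (2 * (d : ℤ) - 1) * (2 * m - 2) + 3) ↔ m = n) ∧
        1 ≤ n) ∧
    (Odd (∑ i, γ i) ∧ ∃ g : ℕ, 2 * (g : ℤ) + 1 = ∑ i, γ i) := by
  have hd' : (2:ℤ) ≤ (d:ℤ) := by exact_mod_cast hd
  -- (a)
  have hsq : ∀ i, (ε i)^2 = (((d/2:ℕ):ℤ) - (-1)^d * (if i = k then 1 else 0))^2 := by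
    intro i; rw [← hε i, sq_abs]
  have hA : ∑ i, (ε i)^2 = (d:ℤ)^2 - (d:ℤ) + 1 := by
    rw [Fin.sum_univ_four, hsq 0, hsq 1, hsq 2, hsq 3]
    rcases Nat.even_or_odd d with he | ho
    · have hs : ((-1:ℤ))^d = 1 := he.neg_one_pow
      obtain ⟨m, hm⟩ := he
      have h2 : d / 2 = m := by omega
      rw [hs, h2, hm]
      fin_cases k <;> simp <;> push_cast <;> ring
    · have hs : ((-1:ℤ))^d = -1 := ho.neg_one_pow
      obtain ⟨m, hm⟩ := ho
      have h2 : d / 2 = m := by omega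
      rw [hs, h2, hm]
      fin_cases k <;> simp <;> push_cast <;> ring
  -- parity of μ
  have hm2 : (μ 0 + μ 1 + μ 2 + μ 3) % 2 = 1 := by
    simp only [Nat.ModEq] at h₁ h₂ h₃; omega
  have hsqmod : ∀ m : ℕ, m^2 % 2 = m % 2 := by
    intro m; rw [Nat.pow_mod]
    rcases Nat.mod_two_eq_zero_or_one m with h | h <;> rw [h] <;> rfl
  have hμ2odd : (μ 0^2 + μ 1^2 + μ 2^2 + μ 3^2) % 2 = 1 := by
    have a := hsqmod (μ 0); have b := hsqmod (μ 1)
    have c := hsqmod (μ 2); have e := hsqmod (μ 3)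
    omega
  have hOdd : Odd (∑ i, (μ i:ℤ)^2) := by
    rw [Fin.sum_univ_four]
    have hcast : ((μ 0:ℤ))^2 + (μ 1:ℤ)^2 + (μ 2:ℤ)^2 + (μ 3:ℤ)^2
        = ((μ 0^2 + μ 1^2 + μ 2^2 + μ 3^2 : ℕ) : ℤ) := by push_cast; ring
    rw [hcast]
    exact_mod_cast Nat.odd_iff.mpr hμ2odd
  obtain ⟨t, ht⟩ := hOdd
  set B : ℤ := ∑ i, (μ i:ℤ) * ε i with hB
  set n : ℤ := (2*(d:ℤ)-1)*t + 2*B + 2*(d:ℤ) with hn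
  have h2n : 2 * n = (2 * (d : ℤ) - 1) * (∑ i, (μ i : ℤ) ^ 2) + 4 * B + 2 * (d:ℤ) + 1 := by
    rw [hn]; linear_combination (-(2*(d:ℤ)-1)) * ht
  have hγ2 : ∑ i, (γ i)^2 = (2*(d:ℤ)-1)*(2*n-2)+3 := by
    simp only [Fin.sum_univ_four] at h2n hA ⊢
    simp only [hB, Fin.sum_univ_four] at h2n
    rw [hγ 0, hγ 1, hγ 2, hγ 3]
    linear_combination (-(2*(d:ℤ)-1))*h2n + 4*hA
  have hn1 : 1 ≤ n := by
    have h0 : 0 ≤ ∑ i, (γ i)^2 := by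
      rw [Fin.sum_univ_four]
      positivity
    rw [hγ2] at h0
    nlinarith
  refine ⟨hA, ⟨⟨n, by linarith⟩, n, h2n, ?_, hn1⟩, ?_, ?_⟩
  · intro m
    constructor
    · intro h
      rw [hγ2] at h
      have hne : (2*(d:ℤ)-1) ≠ 0 := by linarith
      have h' : (2*(d:ℤ)-1) * (2*m-2) = (2*(d:ℤ)-1) * (2*n-2) := by linarith
      have := mul_left_cancel₀ hne h'
      linarith
    · rintro rfl; exact hγ2
  · -- Odd sum γ
    obtain ⟨u, hu⟩ : Odd ((μ 0 : ℤ) + μ 1 + μ 2 + μ 3) := by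
      have : ((μ 0 : ℤ) + μ 1 + μ 2 + μ 3) = ((μ 0 + μ 1 + μ 2 + μ 3 : ℕ) : ℤ) := by
        push_cast; ring
      rw [this]
      exact_mod_cast Nat.odd_iff.mpr hm2
    refine ⟨(2*(d:ℤ)-1)*u + (d:ℤ) - 1 + (ε 0 + ε 1 + ε 2 + ε 3), ?_⟩
    rw [Fin.sum_univ_four, hγ 0, hγ 1, hγ 2, hγ 3]
    linear_combination (2*(d:ℤ)-1) * hu
  · have hpos : 0 ≤ ∑ i, γ i := by
      rw [Fin.sum_univ_four]
      have := hγpos 0; have := hγpos 1; have := hγpos 2; have := hγpos 3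
      linarith
    obtain ⟨s, hs⟩ : Odd (∑ i, γ i) := by
      obtain ⟨u, hu⟩ : Odd ((μ 0 : ℤ) + μ 1 + μ 2 + μ 3) := by
        have : ((μ 0 : ℤ) + μ 1 + μ 2 + μ 3) = ((μ 0 + μ 1 + μ 2 + μ 3 : ℕ) : ℤ) := by
          push_cast; ring
        rw [this]
        exact_mod_cast Nat.odd_iff.mpr hm2
      refine ⟨(2*(d:ℤ)-1)*u + (d:ℤ) - 1 + (ε 0 + ε 1 + ε 2 + ε 3), ?_⟩
      rw [Fin.sum_univ_four, hγ 0, hγ 1, hγ 2, hγ 3]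
      linear_combination (2*(d:ℤ)-1) * hu
    refine ⟨s.toNat, ?_⟩
    rw [Int.toNat_of_nonneg (by linarith)]
    linarith
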